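/- Let G be a finite Camina group. Then: (1) for every normal subgroup N of G, either N ≤ G' or G' ≤ N; and (2) for every normal subgroup N of G with N strictly contained in G', the quotient group G/N is also a Camina group. -/

import Mathlib

open scoped Classical Pointwise

/-- The conjugacy class of `x` in `G`. -/
def conjClass {G : Type*} [Group G] (x : G) : Set G := {y | ∃ g : G, g * x * g⁻¹ = y}

/-- The adjacency matrix of a subset `C` of `G`. -/
noncomputable def adjMat (G : Type*) [Group G] (C : Set G) : Matrix G G ℂ :=
  Matrix.of fun x y => if y * x⁻¹ ∈ C then (1 : ℂ) else 0

/-- The dual idempotent of a subset `C` of `G` (base point the identity). -/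
noncomputable def dualIdem (G : Type*) [Group G] (C : Set G) : Matrix G G ℂ :=
  Matrix.of fun x y => if x = y ∧ y ∈ C then (1 : ℂ) else 0

/-- The Terwilliger algebra of the group association scheme of `G`, with base point `e`. -/
noncomputable def TerwAlg (G : Type*) [Group G] [Fintype G] [DecidableEq G] : Subalgebra ℂ (Matrix G G ℂ) :=
  Algebra.adjoin ℂ
    ((Set.range fun x : G => adjMat G (conjClass x)) ∪
     (Set.range fun x : G => dualIdem G (conjClass x)))

/-- A Camina group: a nonabelian group in which every conjugacy class outside the
commutator subgroup is a coset of the commutator subgroup. -/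
def IsCamina (G : Type*) [Group G] : Prop :=
  (¬ ∀ a b : G, a * b = b * a) ∧
  ∀ x : G, x ∉ commutator G → conjClass x = x • (commutator G : Set G)

/-- The action of the unit group of a field on (the multiplicative version of) its
additive group, by multiplication. -/
noncomputable def frobAct (F : Type*) [Field F] : Fˣ →* MulAut (Multiplicative F) where
  toFun u := AddEquiv.toMultiplicative (DistribMulAction.toAddAut Fˣ F u)
  map_one' := by ext x; rw [map_one]; rfl
  map_mul' u v := by ext x; rw [map_mul]; rfl


/-- The Frobenius group `F ⋊ Fˣ` for `F` the field with `p ^ r` elements. -/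
abbrev FrobGrp (p r : ℕ) [Fact p.Prime] : Type :=
  Multiplicative (GaloisField p r) ⋊[frobAct (GaloisField p r)] (GaloisField p r)ˣ

section Surjective

variable {G H : Type*} [Group G] [Group H]

theorem conjClass_map_of_surjective {f : G →* H} (hf : Function.Surjective f) (x : G) :
    conjClass (f x) = f '' conjClass x := by
  ext y
  constructor
  · rintro ⟨h, rfl⟩
    obtain ⟨g, rfl⟩ := hf h
    exact ⟨g * x * g⁻¹, ⟨g, rfl⟩, by simp⟩
  · rintro ⟨_, ⟨g, rfl⟩, rfl⟩
    exact ⟨f g, by simp⟩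

theorem commutator_eq_map_of_surjective {f : G →* H} (hf : Function.Surjective f) :
    commutator H = (commutator G).map f := by
  rw [map_commutator_eq, f.range_eq_top.mpr hf, commutator_def]

theorem commutator_le_ker_of_forall_mul_comm (f : G →* H) (hH : ∀ a b : H, a * b = b * a) :
    commutator G ≤ f.ker := by
  rw [commutator_def, Subgroup.commutator_le]
  intro a _ b _
  rw [MonoidHom.mem_ker, map_commutatorElement, commutatorElement_eq_one_iff_mul_comm]
  exact hH _ _

end Surjective

namespace IsCamina

variable {G H : Type*} [Group G] [Group H]

theorem exists_conj_eq_mul (hG : IsCamina G) {x c : G} (hx : x ∉ commutator G)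
    (hc : c ∈ commutator G) : ∃ g : G, g * x * g⁻¹ = x * c :=
  show x * c ∈ conjClass x from hG.2 x hx ▸ ⟨c, hc, rfl⟩

/-- Conjugating an element `n ∈ N \ G'` reaches all of `n G'`, and all of it stays in `N`. -/
theorem commutator_le_of_not_le (hG : IsCamina G) {N : Subgroup G} [N.Normal]
    (hN : ¬ N ≤ commutator G) : commutator G ≤ N := by
  obtain ⟨n, hnN, hn⟩ := SetLike.not_le_iff_exists.mp hN
  intro c hc
  obtain ⟨g, hg⟩ := hG.exists_conj_eq_mul hn hc
  have hnc : n * c ∈ N := hg ▸ ‹N.Normal›.conj_mem n hnN g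
  simpa using N.mul_mem (N.inv_mem hnN) hnc

theorem of_surjective (hG : IsCamina G) {f : G →* H} (hf : Function.Surjective f)
    (hker : ¬ commutator G ≤ f.ker) : IsCamina H := by
  refine ⟨fun hH => hker (commutator_le_ker_of_forall_mul_comm f hH), fun y hy => ?_⟩
  obtain ⟨x, rfl⟩ := hf y
  have hx : x ∉ commutator G := fun hx =>
    hy (commutator_eq_map_of_surjective hf ▸ Subgroup.mem_map_of_mem f hx)
  rw [conjClass_map_of_surjective hf, hG.2 x hx, Set.image_smul_distrib,
    commutator_eq_map_of_surjective hf, Subgroup.coe_map]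

theorem quotient (hG : IsCamina G) (N : Subgroup G) [N.Normal] (hN : N < commutator G) :
    IsCamina (G ⧸ N) :=
  hG.of_surjective (QuotientGroup.mk'_surjective N) fun h =>
    hN.not_ge (by rwa [QuotientGroup.ker_mk'] at h)

end IsCamina

theorem stmt14_general {G : Type*} [Group G] (hcam : IsCamina G) :
    (∀ N : Subgroup G, N.Normal → N ≤ commutator G ∨ commutator G ≤ N) ∧
    (∀ (N : Subgroup G) [N.Normal], N < commutator G → IsCamina (G ⧸ N)) :=
  ⟨fun _ _ => or_iff_not_imp_left.2 hcam.commutator_le_of_not_le,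
    fun N _ => hcam.quotient N⟩

/-- Lewis, Lemma 2.3: in a Camina group every normal subgroup is comparable with the
commutator subgroup, and quotients by normal subgroups strictly inside `G'` are Camina. -/
theorem stmt14 {G : Type*} [Group G] [Finite G] (hcam : IsCamina G) :
    (∀ N : Subgroup G, N.Normal → N ≤ commutator G ∨ commutator G ≤ N) ∧
    (∀ (N : Subgroup G) [N.Normal], N < commutator G → IsCamina (G ⧸ N)) :=
  stmt14_general hcam
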